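/- The fold condition u(x,y,z)=0 and u_x(x,y,z)=0, where u = 1-x-y/(β1+x)-z/(β2+x), is satisfied by the parametrized curve (s, φ(s), ψ(s)) with φ(s) = (β1+s)^2(1-β2-2s)/(β1-β2) and ψ(s) = (β2+s)^2(2s+β1-1)/(β1-β2), for β1 ≠ β2. -/
import Mathlib


/-- The parametrized curve (s, φ(s), ψ(s)) satisfies the fold conditions
u = 0 and u_x = 0. -/
theorem stmt_5 (β1 β2 s : ℝ) (hne : β1 ≠ β2)
    (h1 : 0 < β1 + s) (h2 : 0 < β2 + s)
    (φ ψ : ℝ)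
    (hφ : φ = (β1 + s) ^ 2 * (1 - β2 - 2 * s) / (β1 - β2))
    (hψ : ψ = (β2 + s) ^ 2 * (2 * s + β1 - 1) / (β1 - β2)) :
    1 - s - φ / (β1 + s) - ψ / (β2 + s) = 0 ∧
    -1 + φ / (β1 + s) ^ 2 + ψ / (β2 + s) ^ 2 = 0 := by
  have hd : β1 - β2 ≠ 0 := sub_ne_zero.mpr hne
  subst hφ hψ
  constructor <;> field_simp <;> ring
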